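/- Let g ∈ ℝ^K, let M ≥ 1, let w ∈ ℝ^M satisfy w_j ≥ 0 and ∑_{j=1}^M w_j = 1, and let μ_1, …, μ_M ∈ Δ_K be probability vectors with all entries strictly positive. Define b* ∈ Δ_K by b*_k = exp(g_k + ∑_{j=1}^M w_j log μ_j(k)) / ∑_{q=1}^K exp(g_q + ∑_{j=1}^M w_j log μ_j(q)). Then b* minimizes the objective F(b) = −∑_{k=1}^K b_k g_k + ∑_{j=1}^M w_j D_KL(b ‖ μ_j) over all b ∈ Δ_K. -/
import Mathlib


open Finset Real

/-- The probability simplex `Δ_K` in `ℝ^K`. -/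
def simplex {K : ℕ} (μ : Fin K → ℝ) : Prop :=
  (∀ k, 0 ≤ μ k) ∧ ∑ k, μ k = 1

/-- Kullback–Leibler divergence (convention `0 * log 0 = 0`). -/
noncomputable def klDiv {K : ℕ} (p q : Fin K → ℝ) : ℝ :=
  ∑ k, p k * Real.log (p k / q k)

/-- Gibbs-type per-term inequality: `b - q ≤ b (log b - log q)`. -/
lemma aux_term {b q : ℝ} (hb : 0 ≤ b) (hq : 0 < q) :
    b - q ≤ b * (Real.log b - Real.log q) := by
  rcases eq_or_lt_of_le hb with h | h
  · rw [← h]; simp; linarith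
  · have hlog : Real.log (q / b) ≤ q / b - 1 :=
      Real.log_le_sub_one_of_pos (div_pos hq h)
    rw [Real.log_div hq.ne' h.ne'] at hlog
    have h2 := mul_le_mul_of_nonneg_left hlog h.le
    have hb' : b * (q / b - 1) = q - b := by field_simp
    nlinarith

/-- Closed-form solution of the per-agent mirror-descent / Bayesian aggregation
subproblem: the normalized exponential of `g` plus the weighted log-priors
minimizes the linear utility regularized by a convex combination of
KL divergences from the priors `μ j`. -/
theorem stmt3
    {K M : ℕ} (hM : 1 ≤ M) (g : Fin K → ℝ) (w : Fin M → ℝ)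
    (hw_nonneg : ∀ j, 0 ≤ w j) (hw_sum : ∑ j, w j = 1)
    (μ : Fin M → Fin K → ℝ)
    (hμ : ∀ j, simplex (μ j)) (hμ_pos : ∀ j k, 0 < μ j k)
    (bstar : Fin K → ℝ)
    (hbstar : ∀ k, bstar k =
      Real.exp (g k + ∑ j, w j * Real.log (μ j k)) /
        ∑ q, Real.exp (g q + ∑ j, w j * Real.log (μ j q))) :
    simplex bstar ∧
    ∀ b : Fin K → ℝ, simplex b →
      (-∑ k, bstar k * g k) + ∑ j, w j * klDiv bstar (μ j) ≤
        (-∑ k, b k * g k) + ∑ j, w j * klDiv b (μ j) := by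
  -- K is positive, since μ 0 sums to 1
  have hK : 0 < K := by
    by_contra h
    have hK0 : K = 0 := by omega
    have := (hμ ⟨0, hM⟩).2
    subst hK0
    simp at this
  set hh : Fin K → ℝ := fun k => g k + ∑ j, w j * Real.log (μ j k) with hhh
  set Z : ℝ := ∑ q, Real.exp (hh q) with hZ
  have hZpos : 0 < Z := by
    apply Finset.sum_pos (fun q _ => Real.exp_pos _)
    haveI : Nonempty (Fin K) := Fin.pos_iff_nonempty.mp hK
    exact Finset.univ_nonempty
  have hbs : ∀ k, bstar k = Real.exp (hh k) / Z := fun k => hbstar k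
  have hbs_pos : ∀ k, 0 < bstar k := fun k => by
    rw [hbs k]; exact div_pos (Real.exp_pos _) hZpos
  have hbs_sum : ∑ k, bstar k = 1 := by
    simp only [hbs]
    rw [← Finset.sum_div, ← hZ, div_self hZpos.ne']
  have hbs_simplex : simplex bstar := ⟨fun k => (hbs_pos k).le, hbs_sum⟩
  have hlogbs : ∀ k, Real.log (bstar k) = hh k - Real.log Z := fun k => by
    rw [hbs k, Real.log_div (Real.exp_pos _).ne' hZpos.ne', Real.log_exp]
  -- Key representation of the objective
  have key : ∀ b : Fin K → ℝ, (∀ k, 0 ≤ b k) →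
      (-∑ k, b k * g k) + ∑ j, w j * klDiv b (μ j)
        = ∑ k, b k * (Real.log (b k) - hh k) := by
    intro b hb
    have h1 : ∀ j, klDiv b (μ j)
        = (∑ k, b k * Real.log (b k)) - ∑ k, b k * Real.log (μ j k) := by
      intro j
      unfold klDiv
      rw [← Finset.sum_sub_distrib]
      refine Finset.sum_congr rfl fun k _ => ?_
      rcases eq_or_lt_of_le (hb k) with h | h
      · rw [← h]; simp
      · rw [Real.log_div h.ne' (hμ_pos j k).ne']; ring
    have h2 : ∑ j, w j * klDiv b (μ j)
        = (∑ k, b k * Real.log (b k)) - ∑ k, b k * ∑ j, w j * Real.log (μ j k) := by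
      simp only [h1, mul_sub]
      rw [Finset.sum_sub_distrib, ← Finset.sum_mul, hw_sum, one_mul]
      congr 1
      simp only [Finset.mul_sum]
      rw [Finset.sum_comm]
      refine Finset.sum_congr rfl fun k _ => Finset.sum_congr rfl fun j _ => by ring
    have h3 : ∑ k, b k * (Real.log (b k) - hh k)
        = (∑ k, b k * Real.log (b k)) - (∑ k, b k * g k)
          - ∑ k, b k * ∑ j, w j * Real.log (μ j k) := by
      rw [← Finset.sum_sub_distrib, ← Finset.sum_sub_distrib]
      refine Finset.sum_congr rfl fun k _ => ?_
      simp only [hhh]; ring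
    rw [h2, h3]; ring
  refine ⟨hbs_simplex, fun b hbsi => ?_⟩
  rw [key bstar (fun k => (hbs_pos k).le), key b hbsi.1]
  have hFstar : ∑ k, bstar k * (Real.log (bstar k) - hh k) = -Real.log Z := by
    have : ∀ k, bstar k * (Real.log (bstar k) - hh k) = bstar k * (-Real.log Z) := by
      intro k; rw [hlogbs k]; ring
    rw [Finset.sum_congr rfl fun k _ => this k, ← Finset.sum_mul, hbs_sum, one_mul]
  rw [hFstar]
  have hterm : ∀ k, b k - bstar k ≤ b k * (Real.log (b k) - hh k) + b k * Real.log Z := by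
    intro k
    have := aux_term (hbsi.1 k) (hbs_pos k)
    rw [hlogbs k] at this
    linarith
  have hsum : (1:ℝ) - 1 ≤ ∑ k, (b k * (Real.log (b k) - hh k) + b k * Real.log Z) := by
    calc (1:ℝ) - 1 = ∑ k, (b k - bstar k) := by
          rw [Finset.sum_sub_distrib, hbsi.2, hbs_sum]
      _ ≤ _ := Finset.sum_le_sum fun k _ => hterm k
  rw [Finset.sum_add_distrib, ← Finset.sum_mul, hbsi.2, one_mul] at hsum
  linarith
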